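/- arXiv:2103.16787 — 5 statements merged into one kernel-verified Lean document; each statement's English description precedes it below -/
import Mathlib

section
/- Let M be a randomized algorithm on datasets and fix neighboring datasets h0, h1. Partition the outcome space into good outcomes G (possible under both inputs) and bad outcomes B_b (possible under h_b but not h_{1-b}). Suppose there exists a mechanism A(b) such that for every measurable S ⊆ G, Pr[M(h_b) ∈ S] = Pr[A(b) ∈ S], that Pr[M(h_b) ∈ B_b] ≤ δ for b ∈ {0,1}, and that A satisfies the (ε, δ')-DP inequality between its two inputs, i.e. Pr[A(b) ∈ S] ≤ e^ε Pr[A(1-b) ∈ S] + δ' for all S. Then for every measurable S, Pr[M(h_b) ∈ S] ≤ e^ε Pr[M(h_{1-b}) ∈ S] + δ + δ'. -/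
open MeasureTheory
open scoped ENNReal NNReal

theorem measure_le_mul_add_of_inter_le_of_compl_le {Ω : Type*} [MeasurableSpace Ω]
    {μ ν : Measure Ω} {G S : Set Ω} {c δ δ' : ℝ≥0∞}
    (hgood : μ (S ∩ G) ≤ c * ν (S ∩ G) + δ') (hbad : μ Gᶜ ≤ δ) :
    μ S ≤ c * ν S + δ + δ' :=
  calc μ S ≤ μ (S ∩ G) + μ (S \ G) := measure_le_inter_add_sdiff μ S G
    _ ≤ (c * ν (S ∩ G) + δ') + μ Gᶜ := by
        gcongr
        exact Set.sdiff_subset_compl S G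
    _ ≤ (c * ν S + δ') + δ := by gcongr; exact Set.inter_subset_left
    _ = c * ν S + δ + δ' := add_right_comm _ _ _

theorem dp_from_good_bad_decomposition_general
    {Ω : Type*} [MeasurableSpace Ω]
    (M A : Bool → Measure Ω)
    (G B0 B1 : Set Ω)
    (hG : MeasurableSet G)
    (hpart : G ∪ B0 ∪ B1 = Set.univ)
    (ε : ℝ) (δ δ' : ℝ≥0∞)
    -- on good outcomes, M and A coincide
    (hgood : ∀ (b : Bool) (S : Set Ω), MeasurableSet S → S ⊆ G → M b S = A b S)
    -- bad outcomes have small probability under the input where they are possible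
    (hbad0 : M false B0 ≤ δ) (hbad1 : M true B1 ≤ δ)
    -- bad outcomes are impossible under the other input
    (himp0 : M true B0 = 0) (himp1 : M false B1 = 0)
    -- A is (ε, δ')-DP between its two inputs
    (hA : ∀ (b : Bool) (S : Set Ω), MeasurableSet S →
      A b S ≤ ENNReal.ofReal (Real.exp ε) * A (!b) S + δ') :
    ∀ (b : Bool) (S : Set Ω), MeasurableSet S →
      M b S ≤ ENNReal.ofReal (Real.exp ε) * M (!b) S + δ + δ' := by
  intro b S hS
  have hSG : MeasurableSet (S ∩ G) := hS.inter hG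
  have hbad : M b Gᶜ ≤ δ :=
    calc M b Gᶜ ≤ M b (B0 ∪ B1) :=
          measure_mono (Set.compl_subset_iff_union.mpr (by rw [← Set.union_assoc, hpart]))
      _ ≤ M b B0 + M b B1 := measure_union_le B0 B1
      _ ≤ δ := by
          cases b
          · simpa [himp1] using hbad0
          · simpa [himp0] using hbad1
  refine measure_le_mul_add_of_inter_le_of_compl_le ?_ hbad
  rw [hgood b _ hSG Set.inter_subset_right, hgood (!b) _ hSG Set.inter_subset_right]
  exact hA b _ hSG

/-- If a mechanism `M` agrees with a mechanism `A` on all good outcomes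
(outcomes possible under both neighboring inputs), the bad outcomes `B b` (possible
under input `b` only) have probability at most `δ` under `M b` and probability `0`
under `M (!b)`, and `A` satisfies the `(ε, δ')`-DP inequality between its two inputs,
then `M` satisfies the `(ε, δ + δ')`-DP inequality between the two neighboring inputs. -/
theorem dp_from_good_bad_decomposition
    {Ω : Type*} [MeasurableSpace Ω]
    (M A : Bool → Measure Ω)
    [∀ b, IsProbabilityMeasure (M b)] [∀ b, IsProbabilityMeasure (A b)]
    (G B0 B1 : Set Ω)
    (hG : MeasurableSet G) (hB0 : MeasurableSet B0) (hB1 : MeasurableSet B1)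
    (hpart : G ∪ B0 ∪ B1 = Set.univ)
    (ε : ℝ) (δ δ' : ℝ≥0∞)
    -- on good outcomes, M and A coincide
    (hgood : ∀ (b : Bool) (S : Set Ω), MeasurableSet S → S ⊆ G → M b S = A b S)
    -- bad outcomes have small probability under the input where they are possible
    (hbad0 : M false B0 ≤ δ) (hbad1 : M true B1 ≤ δ)
    -- bad outcomes are impossible under the other input
    (himp0 : M true B0 = 0) (himp1 : M false B1 = 0)
    -- A is (ε, δ')-DP between its two inputs
    (hA : ∀ (b : Bool) (S : Set Ω), MeasurableSet S →
      A b S ≤ ENNReal.ofReal (Real.exp ε) * A (!b) S + δ') :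
    ∀ (b : Bool) (S : Set Ω), MeasurableSet S →
      M b S ≤ ENNReal.ofReal (Real.exp ε) * M (!b) S + δ + δ' :=
  dp_from_good_bad_decomposition_general M A G B0 B1 hG hpart ε δ δ' hgood hbad0 hbad1 himp0 himp1
    hA
end

section
/- Let h0 and h1 be histograms over a finite index set such that h0(i) ≥ h1(i) for all i, |h0(i) − h1(i)| ≤ 1 for all i, and the set of coordinates where they differ has size at most Δ0. Fix k̄ and let D_b be the index set of the top-k̄ elements of h_b (with a fixed consistent tie-breaking order). Then the number of differing coordinates among common indices of D_0 and D_1, plus |D_0 \ D_1|, is at most Δ0; in particular |D_0 \ D_1| ≤ Δ0 − ℓ where ℓ is the number of indices in D_0 ∩ D_1 on which h0 and h1 differ. -/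
/-!
If `i ∈ D0 \ D1`, the equal cardinalities give some `j ∈ D1 \ D0`. Then `i` beats `j` for `h0`
and `j` beats `i` for `h1`; since `h1 ≤ h0`, this is impossible when `h0 i = h1 i` (the fixed
tie-breaking rules out the remaining case of all four values being equal). Hence `D0 \ D1`
consists of differing coordinates, disjoint from those counted in `D0 ∩ D1`.
-/

open Finset

def IsTopSet {ι α : Type*} [Preorder ι] [Preorder α] (h : ι → α) (D : Finset ι) : Prop :=
  ∀ i ∈ D, ∀ j ∉ D, h j < h i ∨ (h j = h i ∧ i < j)

theorem IsTopSet.lt_of_mem_sdiff {ι α : Type*} [Preorder ι] [Preorder α] [DecidableEq ι]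
    {f g : ι → α} {D0 D1 : Finset ι} (hgf : g ≤ f) (hf : IsTopSet f D0) (hg : IsTopSet g D1)
    (hcard : #D0 = #D1) {i : ι} (hi : i ∈ D0 \ D1) : g i < f i := by
  obtain ⟨j, hj⟩ : (D1 \ D0).Nonempty := by
    rw [← card_pos, ← card_sdiff_comm hcard]
    exact card_pos.mpr ⟨i, hi⟩
  rw [mem_sdiff] at hi hj
  refine lt_of_le_not_ge (hgf i) fun hfg => ?_
  rcases hf i hi.1 j hj.2 with hji | ⟨hji, hij⟩ <;>
    rcases hg j hj.1 i hi.2 with hij' | ⟨hij', hji'⟩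
  · exact ((hij'.trans_le (hgf j)).trans (hji.trans_le hfg)).false
  · exact ((hgf j).trans_lt (hji.trans_le (hfg.trans_eq hij'))).false
  · exact (hij'.trans_le ((hgf j).trans (hji.le.trans hfg))).false
  · exact hij.asymm hji'

theorem Finset.card_filter_inter_add_card_sdiff {ι : Type*} [DecidableEq ι] {p : ι → Prop}
    [DecidablePred p] {s t : Finset ι} (hp : ∀ i ∈ s \ t, p i) :
    #((s ∩ t).filter p) + #(s \ t) = #(s.filter p) := by
  have hsdiff : s.filter p \ t = s \ t := by
    ext i
    have hpi := hp i
    simp only [mem_sdiff, mem_filter] at hpi ⊢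
    tauto
  rw [← card_inter_add_card_sdiff (s.filter p) t, filter_inter, hsdiff]

theorem topk_sets_l0_bound_general
    {ι : Type*} [Fintype ι] [LinearOrder ι]
    (h0 h1 : ι → ℕ) (kbar Δ0 : ℕ) (D0 D1 : Finset ι)
    (hdom : ∀ i, h1 i ≤ h0 i)
    (hl0 : (Finset.univ.filter (fun i => h0 i ≠ h1 i)).card ≤ Δ0)
    (hcard0 : D0.card = kbar) (hcard1 : D1.card = kbar)
    -- top-kbar with fixed tie-breaking: a member beats every non-member, ties broken
    -- by the fixed linear order on indices (identical for both histograms)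
    (htop0 : ∀ i ∈ D0, ∀ j ∉ D0, h0 j < h0 i ∨ (h0 j = h0 i ∧ i < j))
    (htop1 : ∀ i ∈ D1, ∀ j ∉ D1, h1 j < h1 i ∨ (h1 j = h1 i ∧ i < j)) :
    ((D0 ∩ D1).filter (fun i => h0 i ≠ h1 i)).card + (D0 \ D1).card ≤ Δ0 := by
  have hdiff : ∀ i ∈ D0 \ D1, h0 i ≠ h1 i := fun i hi =>
    (IsTopSet.lt_of_mem_sdiff hdom htop0 htop1 (hcard0.trans hcard1.symm) hi).ne'
  rw [card_filter_inter_add_card_sdiff hdiff]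
  exact (card_le_card (filter_subset_filter _ (subset_univ D0))).trans hl0

/-- For neighboring histograms `h0 ≥ h1` (coordinatewise, gap ≤ 1,
at most `Δ0` differing coordinates) over a finite linearly ordered index set, with
`D0`, `D1` the top-`kbar` index sets of `h0`, `h1` under a fixed consistent
tie-breaking order, the number of differing coordinates among common indices plus
`|D0 \ D1|` is at most `Δ0`. -/
theorem topk_sets_l0_bound
    {ι : Type*} [Fintype ι] [LinearOrder ι]
    (h0 h1 : ι → ℕ) (kbar Δ0 : ℕ) (D0 D1 : Finset ι)
    (hdom : ∀ i, h1 i ≤ h0 i)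
    (hgap : ∀ i, h0 i ≤ h1 i + 1)
    (hl0 : (Finset.univ.filter (fun i => h0 i ≠ h1 i)).card ≤ Δ0)
    (hcard0 : D0.card = kbar) (hcard1 : D1.card = kbar)
    -- top-kbar with fixed tie-breaking: a member beats every non-member, ties broken
    -- by the fixed linear order on indices (identical for both histograms)
    (htop0 : ∀ i ∈ D0, ∀ j ∉ D0, h0 j < h0 i ∨ (h0 j = h0 i ∧ i < j))
    (htop1 : ∀ i ∈ D1, ∀ j ∉ D1, h1 j < h1 i ∨ (h1 j = h1 i ∧ i < j)) :
    ((D0 ∩ D1).filter (fun i => h0 i ≠ h1 i)).card + (D0 \ D1).card ≤ Δ0 :=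
  topk_sets_l0_bound_general h0 h1 kbar Δ0 D0 D1 hdom hl0 hcard0 hcard1 htop0 htop1
end

section
/- Let h0, h1 be histograms with |h0(i) − h1(i)| ≤ 1 for all i and h0 ≥ h1 coordinatewise. Let h0_(k̄+1) and h1_(k̄+1) denote the (k̄+1)-th largest counts of h0 and h1 respectively. Then |h0_(k̄+1) − h1_(k̄+1)| ≤ 1. -/
/-!
The `(k+1)`-th largest count is at least `v` exactly when more than `k` indices have count at
least `v`. So a pointwise bound `h ≤ g + c` transfers to `kthLargest h k ≤ kthLargest g k + c`;
the two one-sided bounds are the cases `c = 0` (from `h1 ≤ h0`) and `c = 1` (from `h0 ≤ h1 + 1`).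
-/

/-- The `(k+1)`-th largest count of a histogram over a finite index set
(`k` is 0-indexed here: `kthLargest h k` is the entry at position `k` of the list of
counts sorted in decreasing order, so `kthLargest h kbar` is the `(kbar+1)`-th largest). -/
noncomputable def kthLargest {ι : Type*} [Fintype ι] (h : ι → ℕ) (k : ℕ) : ℕ :=
  ((Finset.univ.val.map h).sort (· ≥ ·)).getD k 0

open Finset

theorem List.Pairwise.le_getElem_iff_lt_countP {α : Type*} [LinearOrder α] {l : List α}
    (hl : l.Pairwise (· ≥ ·)) {k : ℕ} (hk : k < l.length) (v : α) :
    v ≤ l[k] ↔ k < l.countP (v ≤ ·) := by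
  induction l generalizing k with
  | nil => simp at hk
  | cons a t ih =>
    obtain ⟨ha, ht⟩ := List.pairwise_cons.1 hl
    by_cases hva : v ≤ a
    · cases k with
      | zero => simp [hva]
      | succ k => simp [hva, ih ht (by simpa using hk)]
    · have hlt : ∀ x ∈ t, x < v := fun x hx => (ha x hx).trans_lt (not_le.1 hva)
      cases k with
      | zero => simpa [hva] using hlt
      | succ k =>
        have : t.countP (v ≤ ·) = 0 := List.countP_eq_zero.2 fun x hx => by simpa using hlt x hx
        simp [hva, this, hlt _ (List.getElem_mem _)]

theorem le_kthLargest_iff {ι : Type*} [Fintype ι] (h : ι → ℕ) {k : ℕ}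
    (hk : k < Fintype.card ι) (v : ℕ) :
    v ≤ kthLargest h k ↔ k < #{i | v ≤ h i} := by
  have hlen : k < ((univ.val.map h).sort (· ≥ ·)).length := by simpa using hk
  rw [kthLargest, List.getD_eq_getElem _ _ hlen,
    (Multiset.pairwise_sort _ _).le_getElem_iff_lt_countP hlen, ← Multiset.coe_countP,
    Multiset.sort_eq, Multiset.countP_map]
  rfl

theorem kthLargest_le_add_of_le_add {ι : Type*} [Fintype ι] {h g : ι → ℕ} {c : ℕ}
    (hle : ∀ i, h i ≤ g i + c) {k : ℕ} (hk : k < Fintype.card ι) :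
    kthLargest h k ≤ kthLargest g k + c := by
  have hcount := (le_kthLargest_iff h hk _).1 le_rfl
  have hsub : univ.filter (kthLargest h k ≤ h ·) ⊆ univ.filter (kthLargest h k - c ≤ g ·) :=
    monotone_filter_right _ fun i hi => by have := hle i; omega
  have := (le_kthLargest_iff g hk _).2 (hcount.trans_le (card_le_card hsub))
  omega

/-- For neighboring histograms `h0 ≥ h1` (coordinatewise, gap at most 1)
over a finite index set with at least `kbar + 1` elements, the `(kbar+1)`-th largest
counts of `h0` and `h1` differ by at most 1. -/
theorem kth_largest_counts_close
    {ι : Type*} [Fintype ι]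
    (h0 h1 : ι → ℕ) (kbar : ℕ)
    (hcard : kbar + 1 ≤ Fintype.card ι)
    (hdom : ∀ i, h1 i ≤ h0 i)
    (hgap : ∀ i, h0 i ≤ h1 i + 1) :
    |(kthLargest h0 kbar : ℤ) - (kthLargest h1 kbar : ℤ)| ≤ 1 := by
  have hlower : kthLargest h1 kbar ≤ kthLargest h0 kbar + 0 :=
    kthLargest_le_add_of_le_add hdom hcard
  have hupper : kthLargest h0 kbar ≤ kthLargest h1 kbar + 1 :=
    kthLargest_le_add_of_le_add hgap hcard
  rw [abs_le]
  omega
end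

section
/- Fix neighboring histograms h0 ≥ h1 (coordinatewise, gap at most 1, differing in at most Δ0 coordinates). Let B be the set of indices i with h1(i) = 0 and h0(i) = 1 that appear in the top-k̄ of h0. Running the Gaussian mechanism with noise N(0, τ²) on the top-k̄ counts of h0 and releasing only indices whose noisy count exceeds an independent noisy threshold h_(k̄+1) + 1 + √2·τ·Φ⁻¹(1−δ) + N(0, τ²), the probability that any index of B appears in the output is at most Δ0·δ. -/
open MeasureTheory ProbabilityTheory Finset
open scoped ENNReal NNReal

/-- The standard normal CDF `Φ`. -/
noncomputable def stdGaussianCDF (x : ℝ) : ℝ :=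
  (gaussianReal 0 1 (Set.Iic x)).toReal

lemma gaussianReal_prod_map_sub {m₁ m₂ : ℝ} {v₁ v₂ : ℝ≥0} :
    ((gaussianReal m₁ v₁).prod (gaussianReal m₂ v₂)).map (fun p : ℝ × ℝ => p.1 - p.2)
      = gaussianReal (m₁ - m₂) (v₁ + v₂) := by
  have hsub : (fun p : ℝ × ℝ => p.1 - p.2)
      = (fun p => p.1 + p.2) ∘ Prod.map id (fun x => -x) := by
    ext p; simp [sub_eq_add_neg]
  rw [hsub, ← Measure.map_map (by fun_prop) (by fun_prop),
    ← Measure.map_prod_map _ _ measurable_id measurable_neg, Measure.map_id, gaussianReal_map_neg,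
    sub_eq_add_neg]
  exact gaussianReal_conv_gaussianReal

lemma gaussianReal_Ioi_eq_ofReal_one_sub_stdGaussianCDF (q : ℝ) :
    gaussianReal 0 1 (Set.Ioi q) = ENNReal.ofReal (1 - stdGaussianCDF q) := by
  rw [← Set.compl_Iic, prob_compl_eq_one_sub measurableSet_Iic, stdGaussianCDF,
    ENNReal.ofReal_sub _ ENNReal.toReal_nonneg, ENNReal.ofReal_one,
    ENNReal.ofReal_toReal (measure_ne_top _ _)]

lemma gaussianReal_sq_Ioi_mul_le (σ : ℝ≥0) (q : ℝ) :
    gaussianReal 0 (σ ^ 2) (Set.Ioi (σ * q)) ≤ gaussianReal 0 1 (Set.Ioi q) := by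
  have hscale : gaussianReal 0 (σ ^ 2) = (gaussianReal 0 1).map ((σ : ℝ) * ·) := by
    rw [gaussianReal_map_const_mul, mul_zero, mul_one]
    congr 1
  rw [hscale, Measure.map_apply (measurable_const_mul _) measurableSet_Ioi]
  exact measure_mono fun x hx => lt_of_mul_lt_mul_left hx σ.coe_nonneg

lemma pi_prod_gaussianReal_const_add_lt_eval_le {ι : Type*} [Fintype ι] (τ : ℝ≥0) (q : ℝ)
    (i : ι) :
    ((Measure.pi fun _ : ι => gaussianReal 0 (τ ^ 2)).prod (gaussianReal 0 (τ ^ 2)))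
        {Z : (ι → ℝ) × ℝ | Real.sqrt 2 * τ * q + Z.2 < Z.1 i}
      ≤ ENNReal.ofReal (1 - stdGaussianCDF q) := by
  set σ : ℝ≥0 := NNReal.sqrt 2 * τ
  have hσ : σ ^ 2 = τ ^ 2 + τ ^ 2 := by
    rw [mul_pow, NNReal.sq_sqrt]; ring
  have hevent : {Z : (ι → ℝ) × ℝ | Real.sqrt 2 * τ * q + Z.2 < Z.1 i}
      = Prod.map (Function.eval i) id ⁻¹' ((fun p : ℝ × ℝ => p.1 - p.2) ⁻¹' Set.Ioi (σ * q)) := by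
    ext Z
    simp [σ, lt_sub_iff_add_lt]
  have hmarginal := (measurePreserving_eval (fun _ : ι => gaussianReal 0 (τ ^ 2)) i).prod
    (MeasurePreserving.id (gaussianReal 0 (τ ^ 2)))
  rw [hevent, hmarginal.measure_preimage (measurableSet_Ioi.preimage (by fun_prop)).nullMeasurableSet,
    ← Measure.map_apply (by fun_prop) measurableSet_Ioi, gaussianReal_prod_map_sub, sub_zero, ← hσ,
    ← gaussianReal_Ioi_eq_ofReal_one_sub_stdGaussianCDF]
  exact gaussianReal_sq_Ioi_mul_le σ q

theorem bad_elements_released_prob_le_general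
    {ι : Type*} [Fintype ι]
    (h0 h1 : ι → ℕ) (kbar Δ0 : ℕ) (D0 : Finset ι)
    (hl0 : (Finset.univ.filter (fun i => h0 i ≠ h1 i)).card ≤ Δ0)
    (τ : ℝ≥0) (δ : ℝ)
    (q : ℝ) (hq : stdGaussianCDF q = 1 - δ) :
    ((Measure.pi fun _ : ι => gaussianReal 0 (τ ^ 2)).prod (gaussianReal 0 (τ ^ 2)))
        {Z : (ι → ℝ) × ℝ | ∃ i ∈ D0, h1 i = 0 ∧ h0 i = 1 ∧
          (kthLargest h0 kbar : ℝ) + 1 + Real.sqrt 2 * τ * q + Z.2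
            < (h0 i : ℝ) + Z.1 i}
      ≤ ENNReal.ofReal (Δ0 * δ) := by
  set B := D0.filter fun i => h1 i = 0 ∧ h0 i = 1
  have hB : #B ≤ Δ0 := by
    refine (card_le_card fun i hi => ?_).trans hl0
    simp only [B, mem_filter] at hi ⊢
    exact ⟨mem_univ i, by omega⟩
  have hevent : {Z : (ι → ℝ) × ℝ | ∃ i ∈ D0, h1 i = 0 ∧ h0 i = 1 ∧
        (kthLargest h0 kbar : ℝ) + 1 + Real.sqrt 2 * τ * q + Z.2 < (h0 i : ℝ) + Z.1 i}
      ⊆ ⋃ i ∈ B, {Z | Real.sqrt 2 * τ * q + Z.2 < Z.1 i} := by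
    rintro Z ⟨i, hiD, h1i, h0i, hlt⟩
    simp only [h0i, Nat.cast_one] at hlt
    have hk : (0 : ℝ) ≤ kthLargest h0 kbar := Nat.cast_nonneg _
    exact Set.mem_biUnion (mem_filter.mpr ⟨hiD, h1i, h0i⟩) (Set.mem_ofPred.mpr (by linarith))
  calc _ ≤ _ := measure_mono hevent
    _ ≤ _ := measure_biUnion_finset_le B _
    _ ≤ ∑ _i ∈ B, ENNReal.ofReal δ := sum_le_sum fun i _ => by
        simpa [hq] using pi_prod_gaussianReal_const_add_lt_eval_le τ q i
    _ ≤ Δ0 * ENNReal.ofReal δ := by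
        rw [sum_const, nsmul_eq_mul]
        gcongr
    _ = ENNReal.ofReal (Δ0 * δ) := by
        rw [ENNReal.ofReal_mul (Nat.cast_nonneg _), ENNReal.ofReal_natCast]

/-- For neighboring histograms `h0 ≥ h1` (coordinatewise, gap ≤ 1, at
most `Δ0` differing coordinates), let `B` be the set of indices in the top-`kbar`
set `D0` of `h0` with `h1 i = 0` and `h0 i = 1`.  Adding independent `N(0, τ²)`
noise to the top-`kbar` counts and releasing only indices whose noisy count exceeds
the independent noisy threshold `h_(kbar+1) + 1 + √2·τ·Φ⁻¹(1−δ) + N(0, τ²)`, the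
probability that any index of `B` appears in the output is at most `Δ0·δ`. -/
theorem bad_elements_released_prob_le
    {ι : Type*} [Fintype ι] [DecidableEq ι]
    (h0 h1 : ι → ℕ) (kbar Δ0 : ℕ) (D0 : Finset ι)
    (hdom : ∀ i, h1 i ≤ h0 i) (hgap : ∀ i, h0 i ≤ h1 i + 1)
    (hl0 : (Finset.univ.filter (fun i => h0 i ≠ h1 i)).card ≤ Δ0)
    (hcard0 : D0.card = kbar)
    (htop0 : ∀ i ∈ D0, ∀ j ∉ D0, h0 j ≤ h0 i)
    (τ : ℝ≥0) (hτ : 0 < τ) (δ : ℝ) (hδ : 0 < δ) (hδ1 : δ < 1)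
    (q : ℝ) (hq : stdGaussianCDF q = 1 - δ) :
    ((Measure.pi fun _ : ι => gaussianReal 0 (τ ^ 2)).prod (gaussianReal 0 (τ ^ 2)))
        {Z : (ι → ℝ) × ℝ | ∃ i ∈ D0, h1 i = 0 ∧ h0 i = 1 ∧
          (kthLargest h0 kbar : ℝ) + 1 + Real.sqrt 2 * τ * q + Z.2
            < (h0 i : ℝ) + Z.1 i}
      ≤ ENNReal.ofReal (Δ0 * δ) :=
  bad_elements_released_prob_le_general h0 h1 kbar Δ0 D0 hl0 τ δ q hq
end

section
/- Fix T and define g(r) = (r − 1)·(⌊log_r T⌋ + 1)² for integer r ∈ {2,…,T}. Then for every T ≥ 2, g attains its minimum at some r* with 2 ≤ r* ≤ T, and for all sufficiently large T, g(r*) < g(2); in particular for T ≥ 100, there exists r ∈ {3,…,10} with (r−1)·(⌊log_r T⌋+1)² < (⌊log_2 T⌋+1)². -/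
/-!
A minimiser exists because `{2, …, T}` is finite and nonempty. Base `4` already beats base `2`:
`⌊log_4 T⌋ = ⌊⌊log_2 T⌋ / 2⌋`, so with `k = ⌊log_2 T⌋ ≥ 6` the cost `3 (⌊k/2⌋ + 1)²` of base `4`
is roughly `3k²/4`, below the cost `(k + 1)²` of base `2`.
-/

theorem Nat.log_four_eq_log_two_div_two (n : ℕ) : Nat.log 4 n = Nat.log 2 n / 2 := by
  simpa using Nat.log_pow_left 2 2 n

theorem three_mul_succ_half_sq_lt_succ_sq {k : ℕ} (hk : 6 ≤ k) :
    3 * (k / 2 + 1) ^ 2 < (k + 1) ^ 2 := by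
  have hhalf : 2 * (k / 2) ≤ k := Nat.mul_div_le k 2
  have hthree : 3 ≤ k / 2 := by omega
  nlinarith

/-- Let `g r = (r − 1)·(⌊log_r T⌋ + 1)²` be (proportional to) the
per-count noise variance of the base-`r` generalized Binary Mechanism.  For every
`T ≥ 2`, `g` attains its minimum over `r ∈ {2, …, T}` at some `r*`, and for all
`T ≥ 100` there is a base `r ∈ {3, …, 10}` with `g r < g 2 = (⌊log_2 T⌋ + 1)²`. -/
theorem optimal_base_beats_two (T : ℕ) (hT : 2 ≤ T) :
    (∃ rstar, 2 ≤ rstar ∧ rstar ≤ T ∧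
      ∀ r, 2 ≤ r → r ≤ T →
        (rstar - 1) * (Nat.log rstar T + 1) ^ 2 ≤ (r - 1) * (Nat.log r T + 1) ^ 2) ∧
    (100 ≤ T →
      ∃ r, 3 ≤ r ∧ r ≤ 10 ∧
        (r - 1) * (Nat.log r T + 1) ^ 2 < (Nat.log 2 T + 1) ^ 2) := by
  constructor
  · obtain ⟨rstar, hmem, hmin⟩ := Finset.exists_min_image (Finset.Icc 2 T)
      (fun r => (r - 1) * (Nat.log r T + 1) ^ 2) ⟨2, Finset.mem_Icc.mpr ⟨le_rfl, hT⟩⟩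
    obtain ⟨h2, hT'⟩ := Finset.mem_Icc.mp hmem
    exact ⟨rstar, h2, hT', fun r h2r hrT => hmin r (Finset.mem_Icc.mpr ⟨h2r, hrT⟩)⟩
  · intro h100
    have hlog : 6 ≤ Nat.log 2 T := Nat.le_log_of_pow_le (by norm_num) (by omega)
    refine ⟨4, by norm_num, by norm_num, ?_⟩
    rw [Nat.log_four_eq_log_two_div_two]
    exact three_mul_succ_half_sq_lt_succ_sq hlog
end
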